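/- Let A : ℂ → Matrix n n ℂ be such that A(x) commutes with a primitive B(x) (i.e. B′(x) = A(x) and A(x) * B(x) = B(x) * A(x) for all x in an open set). Then for any constant vector c, the function Y(x) = exp(B(x)) c satisfies Y′(x) = A(x) Y(x). -/

import Mathlib

/-
When `A = B'` commutes with `B`, the Fréchet derivative of `exp` at `B x` applied to `A x` is the
derivative at `0` of `t ↦ exp (B x + t • A x) = exp (B x) * exp (t • A x)`, namely
`exp (B x) * A x`. So `(exp ∘ B)' = A * exp B` exactly as for scalars, and applying this to `c`
gives `Y' = A Y`.
-/

open NormedSpace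
open scoped Matrix

section BanachAlgebra

variable {𝕂 𝔸 : Type*} [RCLike 𝕂] [NormedRing 𝔸] [NormedAlgebra 𝕂 𝔸] [CompleteSpace 𝔸]

theorem fderiv_exp_apply_of_commute {a x : 𝔸} (h : Commute a x) :
    fderiv 𝕂 exp x a = exp x * a := by
  have hline : HasDerivAt (fun t : 𝕂 => x + t • a) a 0 := by
    simpa using ((hasDerivAt_id (0 : 𝕂)).smul_const a).const_add x
  have hfderiv : HasFDerivAt exp (fderiv 𝕂 exp x) (x + (0 : 𝕂) • a) := by
    simpa using (exp_analytic (𝕂 := 𝕂) x).differentiableAt.hasFDerivAt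
  have hsplit : (fun t : 𝕂 => exp (x + t • a)) = fun t => exp x * exp (t • a) := by
    funext t
    exact exp_add_of_commute_of_mem_ball (𝕂 := 𝕂) (h.symm.smul_right t)
      (by simp [expSeries_radius_eq_top]) (by simp [expSeries_radius_eq_top])
  have hprod : HasDerivAt (fun t : 𝕂 => exp (x + t • a)) (exp x * a) 0 := by
    simpa [hsplit] using (hasDerivAt_exp_smul_const a (0 : 𝕂)).const_mul (exp x)
  exact (hfderiv.comp_hasDerivAt 0 hline).unique hprod

theorem HasDerivAt.exp_of_commute {f : 𝕂 → 𝔸} {a : 𝔸} {t : 𝕂} (hf : HasDerivAt f a t)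
    (h : Commute a (f t)) :
    HasDerivAt (fun s => NormedSpace.exp (f s)) (a * NormedSpace.exp (f t)) t := by
  have hexp :=
    (NormedSpace.exp_analytic (𝕂 := 𝕂) (f t)).differentiableAt.hasFDerivAt.comp_hasDerivAt t hf
  rwa [fderiv_exp_apply_of_commute h, ← h.exp_right.eq] at hexp

end BanachAlgebra

theorem HasDerivAt.matrix_mulVec_const {𝕜 m n : Type*} [NontriviallyNormedField 𝕜]
    [Fintype m] [Fintype n] {M : 𝕜 → Matrix m n 𝕜} {M' : Matrix m n 𝕜} {x : 𝕜}
    (h : HasDerivAt M M' x) (v : n → 𝕜) : HasDerivAt (fun y => M y *ᵥ v) (M' *ᵥ v) x :=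
  hasDerivAt_pi.2 fun i => by
    simpa [Matrix.mulVec, dotProduct] using HasDerivAt.fun_sum (u := Finset.univ) fun j _ =>
      (hasDerivAt_pi.1 (hasDerivAt_pi.1 h i) j).mul_const (v j)

-- The entrywise sup norm is not submultiplicative; the operator norm makes `Matrix n n ℂ` a
-- Banach algebra and induces the same (product) topology, so `hB` applies unchanged.
open scoped Matrix.Norms.Operator in
theorem stmt_4_general {n : Type*} [Fintype n] [DecidableEq n]
    (A B : ℂ → Matrix n n ℂ) (U : Set ℂ)
    (hB : ∀ x ∈ U, HasDerivAt B (A x) x)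
    (hcomm : ∀ x ∈ U, Commute (A x) (B x))
    (c : n → ℂ) (x : ℂ) (hx : x ∈ U) :
    HasDerivAt (fun y : ℂ => (NormedSpace.exp (B y)).mulVec c)
      ((A x).mulVec ((NormedSpace.exp (B x)).mulVec c)) x := by
  have hexp : HasDerivAt (fun y => exp (B y)) (A x * exp (B x)) x :=
    (hB x hx).exp_of_commute (hcomm x hx)
  simpa only [Matrix.mulVec_mulVec] using hexp.matrix_mulVec_const c

theorem stmt_4 {n : Type*} [Fintype n] [DecidableEq n]
    (A B : ℂ → Matrix n n ℂ) (U : Set ℂ) (hU : IsOpen U)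
    (hB : ∀ x ∈ U, HasDerivAt B (A x) x)
    (hcomm : ∀ x ∈ U, Commute (A x) (B x))
    (c : n → ℂ) (x : ℂ) (hx : x ∈ U) :
    HasDerivAt (fun y : ℂ => (NormedSpace.exp (B y)).mulVec c)
      ((A x).mulVec ((NormedSpace.exp (B x)).mulVec c)) x :=
  stmt_4_general A B U hB hcomm c x hx
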